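/- Consider minimizing f(β) = (1/2) βᵀ(X̂ᵀX̂ + ξ D²)β + (ρ d − X̂ᵀ x̂)ᵀβ over the unit simplex in ℝⁿ, where D = diag(d) with d = (d⁽¹⁾,…,d⁽ⁿ⁾), d⁽ʲ⁾ > d⁽¹⁾ > 0 for all j ≥ 2, ξ > 0, and X̂ has columns x̂⁽¹⁾,…,x̂⁽ⁿ⁾. If ρ > max over j ∈ {2,…,n} of [ (x̂⁽¹⁾ − x̂⁽ʲ⁾)ᵀ(x̂⁽¹⁾ − x̂) + ξ (d⁽¹⁾)² ] / (d⁽ʲ⁾ − d⁽¹⁾), then e₁ is the unique minimizer. -/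

import Mathlib

open Matrix

/-- The WSSR quadratic objective f(β) = ½βᵀ(X̂ᵀX̂ + ξD²)β + (ρd − X̂ᵀx̂)ᵀβ,
where X̂ has columns x̂⁽ʲ⁾ and D = diag d. -/
noncomputable def wssrObj (P n : ℕ) (xhat : Fin n → Fin P → ℝ) (x : Fin P → ℝ)
    (d : Fin n → ℝ) (ξ ρ : ℝ) (β : Fin n → ℝ) : ℝ :=
  let X : Matrix (Fin P) (Fin n) ℝ := Matrix.of fun p j => xhat j p
  (1/2) * (β ⬝ᵥ (Xᵀ * X + ξ • (Matrix.diagonal d)^2).mulVec β)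
    + (ρ • d - Xᵀ.mulVec x) ⬝ᵥ β

/-!
The Hessian `Q = X̂ᵀX̂ + ξD²` is positive definite, so `f(e₁ + v) - f(e₁) = ½vᵀQv + ∇f(e₁)ᵀv`
has a strictly positive quadratic part for `v ≠ 0`. On the simplex the linear part is
`∇f(e₁)ᵀβ - ∇f(e₁)₁ ≥ 0` as soon as the first coordinate of the gradient at `e₁` is its
smallest, and the bound on `ρ` is exactly `∇f(e₁)ⱼ > ∇f(e₁)₁` for `j ≥ 2`.
-/

section Quadratic

variable {ι : Type*} [Fintype ι]

noncomputable def quadraticObj (Q : Matrix ι ι ℝ) (c β : ι → ℝ) : ℝ :=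
  (1/2) * (β ⬝ᵥ Q *ᵥ β) + c ⬝ᵥ β

theorem quadraticObj_add_sub {Q : Matrix ι ι ℝ} (hQ : Q.IsHermitian) (c e v : ι → ℝ) :
    quadraticObj Q c (e + v) - quadraticObj Q c e
      = (1/2) * (v ⬝ᵥ Q *ᵥ v) + (Q *ᵥ e + c) ⬝ᵥ v := by
  have hsym : e ⬝ᵥ Q *ᵥ v = (Q *ᵥ e) ⬝ᵥ v := by
    rw [dotProduct_mulVec, ← mulVec_transpose, ← conjTranspose_eq_transpose_of_trivial, hQ.eq]
  simp only [quadraticObj, mulVec_add, add_dotProduct, dotProduct_add, hsym,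
    dotProduct_comm v (Q *ᵥ e)]
  ring

theorem le_dotProduct_of_mem_stdSimplex {g β : ι → ℝ} {i : ι} (hg : ∀ j, g i ≤ g j)
    (hβ : β ∈ stdSimplex ℝ ι) : g i ≤ g ⬝ᵥ β :=
  calc g i = ∑ j, β j * g i := by rw [← Finset.sum_mul, hβ.2, one_mul]
    _ ≤ g ⬝ᵥ β := by
      rw [dotProduct_comm]
      exact Finset.sum_le_sum fun j _ => mul_le_mul_of_nonneg_left (hg j) (hβ.1 j)

variable [DecidableEq ι]

theorem quadraticObj_single_lt_of_mem_stdSimplex {Q : Matrix ι ι ℝ} (hQ : Q.PosDef)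
    {c β : ι → ℝ} {i : ι} (hgrad : ∀ j, (Q *ᵥ Pi.single i 1 + c) i ≤ (Q *ᵥ Pi.single i 1 + c) j)
    (hβ : β ∈ stdSimplex ℝ ι) (hne : β ≠ Pi.single i 1) :
    quadraticObj Q c (Pi.single i 1) < quadraticObj Q c β := by
  set e : ι → ℝ := Pi.single i 1
  have hquad : 0 < (β - e) ⬝ᵥ Q *ᵥ (β - e) := hQ.dotProduct_mulVec_pos (sub_ne_zero.2 hne)
  have hlin : 0 ≤ (Q *ᵥ e + c) ⬝ᵥ (β - e) := by
    rw [dotProduct_sub, dotProduct_single, mul_one, sub_nonneg]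
    exact le_dotProduct_of_mem_stdSimplex hgrad hβ
  have hsplit := quadraticObj_add_sub hQ.isHermitian c e (β - e)
  rw [add_sub_cancel] at hsplit
  linarith

theorem posDef_transpose_mul_self_add_smul_diagonal_sq {m : Type*} [Fintype m]
    (A : Matrix m ι ℝ) {ξ : ℝ} (hξ : 0 < ξ) {d : ι → ℝ} (hd : ∀ j, d j ≠ 0) :
    (Aᵀ * A + ξ • diagonal d ^ 2).PosDef := by
  refine PosDef.posSemidef_add ?_ ?_
  · simpa using posSemidef_conjTranspose_mul_self A
  · rw [diagonal_pow]
    refine PosDef.smul (PosDef.diagonal fun j => ?_) hξ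
    exact sq_pos_of_ne_zero (hd j)
end Quadratic

section Wssr

variable {P n : ℕ} (xhat : Fin n → Fin P → ℝ) (x : Fin P → ℝ) (d : Fin n → ℝ) (ξ ρ : ℝ)

def wssrDesign : Matrix (Fin P) (Fin n) ℝ :=
  Matrix.of fun p j => xhat j p

noncomputable def wssrHessian : Matrix (Fin n) (Fin n) ℝ :=
  (wssrDesign xhat)ᵀ * wssrDesign xhat + ξ • diagonal d ^ 2

noncomputable def wssrLinear : Fin n → ℝ :=
  ρ • d - (wssrDesign xhat)ᵀ *ᵥ x

theorem wssrObj_eq_quadraticObj :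
    wssrObj P n xhat x d ξ ρ = quadraticObj (wssrHessian xhat d ξ) (wssrLinear xhat x d ρ) :=
  rfl

theorem wssrHessian_posDef {ξ : ℝ} (hξ : 0 < ξ) {d : Fin n → ℝ} (hd : ∀ j, d j ≠ 0) :
    (wssrHessian xhat d ξ).PosDef :=
  posDef_transpose_mul_self_add_smul_diagonal_sq _ hξ hd

theorem wssr_gradient_apply (i j : Fin n) :
    (wssrHessian xhat d ξ *ᵥ Pi.single i 1 + wssrLinear xhat x d ρ) j
      = xhat j ⬝ᵥ xhat i + ξ * d j ^ 2 * (Pi.single i 1 : Fin n → ℝ) j + (ρ * d j - xhat j ⬝ᵥ x) := by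
  simp [wssrHessian, wssrLinear, wssrDesign, mulVec_single, mul_apply, diagonal_pow,
    diagonal_apply, mulVec, dotProduct, Pi.single_apply]

theorem wssr_gradient_sub_gradient {i j : Fin n} (hji : j ≠ i) :
    (wssrHessian xhat d ξ *ᵥ Pi.single i 1 + wssrLinear xhat x d ρ) j
      - (wssrHessian xhat d ξ *ᵥ Pi.single i 1 + wssrLinear xhat x d ρ) i
      = ρ * (d j - d i) - ((xhat i - xhat j) ⬝ᵥ (xhat i - x) + ξ * d i ^ 2) := by
  simp only [wssr_gradient_apply, Pi.single_eq_same, Pi.single_eq_of_ne hji, sub_dotProduct,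
    dotProduct_sub]
  ring

end Wssr

theorem stmt6_general (P n : ℕ)
    (xhat : Fin n → Fin P → ℝ) (x : Fin P → ℝ) (d : Fin n → ℝ)
    (ξ ρ : ℝ) (hξ : 0 < ξ)
    (i0 : Fin n)
    (hd1 : 0 < d i0) (hd : ∀ j, j ≠ i0 → d i0 < d j)
    (hρ : ∀ j, j ≠ i0 →
      ρ > ((xhat i0 - xhat j) ⬝ᵥ (xhat i0 - x) + ξ * (d i0)^2) / (d j - d i0)) :
    ∀ β ∈ stdSimplex ℝ (Fin n), β ≠ Pi.single i0 1 →
      wssrObj P n xhat x d ξ ρ (Pi.single i0 1) < wssrObj P n xhat x d ξ ρ β := by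
  intro β hβ hne
  have hd_pos : ∀ j, 0 < d j := fun j =>
    if hj : j = i0 then hj ▸ hd1 else hd1.trans (hd j hj)
  rw [wssrObj_eq_quadraticObj]
  refine quadraticObj_single_lt_of_mem_stdSimplex
    (wssrHessian_posDef xhat hξ fun j => (hd_pos j).ne') (fun j => ?_) hβ hne
  by_cases hj : j = i0
  · rw [hj]
  · have hgap := wssr_gradient_sub_gradient xhat x d ξ ρ hj
    have := (div_lt_iff₀ (sub_pos.2 (hd j hj))).1 (hρ j hj)
    linarith

/-- Sufficient condition for e₁ being the unique minimizer of the WSSR problem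
over the unit simplex. -/
theorem stmt6 (P n : ℕ) (hn : 0 < n)
    (xhat : Fin n → Fin P → ℝ) (x : Fin P → ℝ) (d : Fin n → ℝ)
    (ξ ρ : ℝ) (hξ : 0 < ξ)
    (i0 : Fin n) (hi0 : i0 = ⟨0, hn⟩)
    (hd1 : 0 < d i0) (hd : ∀ j, j ≠ i0 → d i0 < d j)
    (hρ : ∀ j, j ≠ i0 →
      ρ > ((xhat i0 - xhat j) ⬝ᵥ (xhat i0 - x) + ξ * (d i0)^2) / (d j - d i0)) :
    ∀ β ∈ stdSimplex ℝ (Fin n), β ≠ Pi.single i0 1 →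
      wssrObj P n xhat x d ξ ρ (Pi.single i0 1) < wssrObj P n xhat x d ξ ρ β :=
  stmt6_general P n xhat x d ξ ρ hξ i0 hd1 hd hρ
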